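/- Assume the box-diagonal EPCAG setting, let α ∈ (0,σ) and assume 2K·L·(1+exp(σθ̄)) < σ−α, and assume additionally that the transition operator V satisfies the cocycle identity V(t,s) ∘ V(s,r) = V(t,r). Then every solution z = (u,v) of system (3*) on [t₀,∞) that is bounded on [t₀,∞) lies on the stable surface: it satisfies, for all t ≥ t₀, the integral system u(t) = U(t,t₀)u(t₀) + ∫_{t₀}^{t} U(t,s)·g₊(s, z(s), z(β(s))) ds and v(t) = −∫_{t}^{∞} V(t,s)·g₋(s, z(s), z(β(s))) ds; in particular v(t₀) = −∫_{t₀}^{∞} V(t₀,s)·g₋(s, z(s), z(β(s))) ds. Equivalently, any solution whose initial point does not satisfy this relation is unbounded on [t₀,∞). -/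

import Mathlib

/-!
Both components obey the variation-of-constants formula on every interval: if `y' = B y + G`
(right derivatives) and `W` is the transition operator of `B`, then `s ↦ W(c, s) y(s)` has right
derivative `W(c, s) G(s)`, because `∂ₛ W(c, s) = -W(c, s) B(s)` (the cocycle identity, from
uniqueness for linear ODEs, makes `W(c, s)` the inverse of `W(s, c)`). Integrating over `[t₀, t]`
gives the formula for `u`. For `v` integrate over `[t, T]`: boundedness of `z` (and hence of
`z ∘ β`) makes the forcing `g₋(s, z(s), z(β(s)))` bounded, so `∫_t^∞ V(t, s) g₋ ds` converges,
while `‖V(t, T) v(T)‖ ≤ K e^{-σ(T-t)} sup ‖v‖ → 0`; letting `T → ∞` leaves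
`v(t) = -∫_t^∞ V(t, s) g₋ ds`.
-/

open Set Real Filter MeasureTheory

noncomputable section

abbrev Ek (k : ℕ) : Type := EuclideanSpace ℝ (Fin k)

/-- `z` is a solution of the box-diagonal EPCAG system (3*) on the set `J`:
`z` is continuous on `J`, has the prescribed right derivative at every point of `J`,
and at points not of the form `θ i` it is differentiable (within `J`). -/
def SolOn {k m : ℕ} (θ : ℤ → ℝ) (β : ℝ → ℝ)
    (Bp : ℝ → Ek k →L[ℝ] Ek k) (Bm : ℝ → Ek m →L[ℝ] Ek m)
    (gp : ℝ → Ek k × Ek m → Ek k × Ek m → Ek k)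
    (gm : ℝ → Ek k × Ek m → Ek k × Ek m → Ek m)
    (z : ℝ → Ek k × Ek m) (J : Set ℝ) : Prop :=
  ContinuousOn z J ∧
  ∀ t ∈ J,
    (HasDerivWithinAt (fun s => (z s).1)
        (Bp t (z t).1 + gp t (z t) (z (β t))) (Ici t ∩ J) t ∧
      HasDerivWithinAt (fun s => (z s).2)
        (Bm t (z t).2 + gm t (z t) (z (β t))) (Ici t ∩ J) t) ∧
    (t ∉ Set.range θ →
      HasDerivWithinAt (fun s => (z s).1)
        (Bp t (z t).1 + gp t (z t) (z (β t))) J t ∧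
      HasDerivWithinAt (fun s => (z s).2)
        (Bm t (z t).2 + gm t (z t) (z (β t))) J t)

open Topology

section LinearODE

variable {F : Type*} [NormedAddCommGroup F] [NormedSpace ℝ F]

theorem eq_of_hasDerivAt_clm_apply {A : ℝ → F →L[ℝ] F} (hA : Continuous A) {f g : ℝ → F}
    (hf : ∀ t, HasDerivAt f (A t (f t)) t) (hg : ∀ t, HasDerivAt g (A t (g t)) t)
    {t₀ : ℝ} (h₀ : f t₀ = g t₀) : f = g := by
  have hopen : IsOpen {t | f t = g t} := by
    -- `A` is only locally bounded: uniqueness holds locally and spreads by connectedness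
    refine isOpen_iff_mem_nhds.2 fun t ht => ?_
    have hlip : ∀ᶠ s in 𝓝 t, LipschitzOnWith (‖A t‖₊ + 1) (A s) univ := by
      filter_upwards [hA.continuousAt.norm.eventually_lt_const (lt_add_one ‖A t‖)]
        with s hs
      refine ((A s).lipschitz.weaken ?_).lipschitzOnWith
      rw [← NNReal.coe_le_coe]
      push_cast
      exact hs.le
    exact ODE_solution_unique_of_eventually hlip (.of_forall fun s => ⟨hf s, mem_univ _⟩)
      (.of_forall fun s => ⟨hg s, mem_univ _⟩) ht
  have hclosed : IsClosed {t | f t = g t} :=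
    isClosed_eq (continuous_iff_continuousAt.2 fun t => (hf t).continuousAt)
      (continuous_iff_continuousAt.2 fun t => (hg t).continuousAt)
  have huniv := IsClopen.eq_univ ⟨hclosed, hopen⟩ ⟨t₀, h₀⟩
  exact funext fun t => (huniv.symm ▸ mem_univ t : t ∈ {t | f t = g t})

structure IsTransitionOperator (B : ℝ → F →L[ℝ] F) (U : ℝ → ℝ → F →L[ℝ] F) : Prop where
  apply_self : ∀ s, U s s = ContinuousLinearMap.id ℝ F
  hasDerivAt : ∀ s t, HasDerivAt (fun r => U r s) ((B t).comp (U t s)) t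

namespace IsTransitionOperator

variable {B : ℝ → F →L[ℝ] F} {U : ℝ → ℝ → F →L[ℝ] F}

theorem comp_eq (hU : IsTransitionOperator B U) (hB : Continuous B) (t r s : ℝ) :
    (U t r).comp (U r s) = U t s := by
  have hcomp : Continuous fun t => ContinuousLinearMap.compL ℝ F F F (B t) :=
    (ContinuousLinearMap.compL ℝ F F F).continuous.comp hB
  refine congrFun (eq_of_hasDerivAt_clm_apply hcomp (f := fun t => (U t r).comp (U r s))
    (fun t => ?_) (fun t => hU.hasDerivAt s t) (t₀ := r) ?_) t
  · simpa [ContinuousLinearMap.comp_assoc] using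
      (hU.hasDerivAt r t).clm_comp (hasDerivAt_const t (U r s))
  · simp [hU.apply_self]

theorem comp_eq_id (hU : IsTransitionOperator B U) (hB : Continuous B) (t s : ℝ) :
    (U t s).comp (U s t) = ContinuousLinearMap.id ℝ F := by
  rw [hU.comp_eq hB, hU.apply_self]

theorem hasDerivAt_right [CompleteSpace F] (hU : IsTransitionOperator B U) (hB : Continuous B)
    (t s : ℝ) : HasDerivAt (fun r => U t r) (-(U t s).comp (B s)) s := by
  let x : (F →L[ℝ] F)ˣ := ⟨U s t, U t s, hU.comp_eq_id hB s t, hU.comp_eq_id hB t s⟩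
  have hinv : (fun r => U t r) = fun r => Ring.inverse (U r t) := funext fun r =>
    (Ring.inverse_unit (⟨U r t, U t r, hU.comp_eq_id hB r t, hU.comp_eq_id hB t r⟩ :
      (F →L[ℝ] F)ˣ)).symm
  have hD : (-ContinuousLinearMap.mulLeftRight ℝ (F →L[ℝ] F) ↑x⁻¹ ↑x⁻¹) ((B s).comp (U s t)) =
      -(U t s).comp (B s) := by
    simp only [x, neg_apply, ContinuousLinearMap.mulLeftRight_apply,
      Units.inv_mk, ContinuousLinearMap.mul_def, ContinuousLinearMap.comp_assoc,
      hU.comp_eq_id hB s t, ContinuousLinearMap.comp_id]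
  rw [hinv, ← hD]
  exact (hasFDerivAt_ringInverse x).comp_hasDerivAt s (hU.hasDerivAt t s)

theorem continuous_right [CompleteSpace F] (hU : IsTransitionOperator B U) (hB : Continuous B)
    (t : ℝ) : Continuous (U t) :=
  continuous_iff_continuousAt.2 fun s => (hU.hasDerivAt_right hB t s).continuousAt

theorem integral_eq_sub [CompleteSpace F] (hU : IsTransitionOperator B U) (hB : Continuous B)
    (c : ℝ) {a b : ℝ} (hab : a ≤ b) {y G : ℝ → F} (hy : ContinuousOn y (Icc a b))
    (hyd : ∀ x ∈ Ico a b, HasDerivWithinAt y (B x (y x) + G x) (Ici x) x)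
    (hG : IntervalIntegrable (fun s => U c s (G s)) volume a b) :
    ∫ s in a..b, U c s (G s) = U c b (y b) - U c a (y a) := by
  refine intervalIntegral.integral_eq_sub_of_hasDeriv_right_of_le hab
    ((hU.continuous_right hB c).continuousOn.clm_apply hy) (fun x hx => ?_) hG
  have hprod := (hU.hasDerivAt_right hB c x).hasDerivWithinAt.clm_apply
    ((hyd x (Ioo_subset_Ico_self hx)).mono Ioi_subset_Ici_self)
  convert hprod using 1
  simp

end IsTransitionOperator

end LinearODE

section OperatorFamily

variable {E F : Type*} [NormedAddCommGroup E] [NormedSpace ℝ E] [NormedAddCommGroup F]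
  [NormedSpace ℝ F] {U : ℝ → ℝ → E →L[ℝ] F} {K σ : ℝ}

theorem Continuous.aestronglyMeasurable_clm_apply {W : ℝ → E →L[ℝ] F} (hW : Continuous W)
    {G : ℝ → E} {μ : Measure ℝ} (hG : AEStronglyMeasurable G μ) :
    AEStronglyMeasurable (fun s => W s (G s)) μ :=
  isBoundedBilinearMap_apply.continuous.comp_aestronglyMeasurable
    (hW.aestronglyMeasurable.prodMk hG)

theorem Continuous.intervalIntegrable_clm_apply {W : ℝ → E →L[ℝ] F}
    (hW : Continuous W) {G : ℝ → E} {a b D : ℝ} (hab : a ≤ b)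
    (hG : AEStronglyMeasurable G (volume.restrict (Icc a b))) (hGD : ∀ s ∈ Icc a b, ‖G s‖ ≤ D) :
    IntervalIntegrable (fun s => W s (G s)) volume a b := by
  obtain ⟨M, hM⟩ := isCompact_Icc.exists_bound_of_continuousOn (hW.continuousOn (s := Icc a b))
  exact (intervalIntegrable_iff_integrableOn_Icc_of_le hab).2
    (Integrable.of_bound (hW.aestronglyMeasurable_clm_apply hG) (M * D)
      (ae_restrict_of_forall_mem measurableSet_Icc fun s hs =>
        (W s).le_of_opNorm_le_of_le (hM s hs) (hGD s hs)))

theorem tendsto_apply_atTop_of_decay (hσ : 0 < σ)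
    (hdecay : ∀ s t, t ≤ s → ‖U t s‖ ≤ K * exp (-σ * (s - t))) {y : ℝ → E} {t C : ℝ}
    (hyC : ∀ s, t ≤ s → ‖y s‖ ≤ C) : Tendsto (fun s => U t s (y s)) atTop (𝓝 0) := by
  have hexp : Tendsto (fun s => K * exp (-σ * (s - t)) * C) atTop (𝓝 0) := by
    have hlin : Tendsto (fun s => -σ * (s - t)) atTop atBot :=
      (tendsto_atTop_add_const_right _ (-t) tendsto_id).const_mul_atTop_of_neg (by linarith)
    simpa using ((tendsto_exp_atBot.comp hlin).const_mul K).mul_const C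
  refine squeeze_zero_norm' ?_ hexp
  filter_upwards [eventually_ge_atTop t] with s hs
  exact (U t s).le_of_opNorm_le_of_le (hdecay s t hs) (hyC s hs)

theorem integrableOn_Ioi_apply_of_decay (hσ : 0 < σ)
    (hdecay : ∀ s t, t ≤ s → ‖U t s‖ ≤ K * exp (-σ * (s - t))) {G : ℝ → E} {t D : ℝ}
    (hU : Continuous (U t)) (hG : AEStronglyMeasurable G (volume.restrict (Ioi t)))
    (hGD : ∀ s, t < s → ‖G s‖ ≤ D) : IntegrableOn (fun s => U t s (G s)) (Ioi t) := by
  refine Integrable.mono' ((exp_neg_integrableOn_Ioi t hσ).const_mul (K * exp (σ * t) * D))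
    (hU.aestronglyMeasurable_clm_apply hG) (ae_restrict_of_forall_mem measurableSet_Ioi
      fun s hs => ?_)
  calc ‖U t s (G s)‖ ≤ K * exp (-σ * (s - t)) * D :=
        (U t s).le_of_opNorm_le_of_le (hdecay s t (le_of_lt hs)) (hGD s hs)
    _ = K * exp (σ * t) * D * exp (-σ * s) := by
        rw [show -σ * (s - t) = σ * t + -σ * s by ring, exp_add]
        ring

end OperatorFamily

theorem IsTransitionOperator.eq_neg_integral_Ioi {F : Type*} [NormedAddCommGroup F]
    [NormedSpace ℝ F] [CompleteSpace F] {B : ℝ → F →L[ℝ] F} {U : ℝ → ℝ → F →L[ℝ] F} {K σ : ℝ}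
    (hU : IsTransitionOperator B U) (hB : Continuous B) (hσ : 0 < σ)
    (hdecay : ∀ s t, t ≤ s → ‖U t s‖ ≤ K * exp (-σ * (s - t))) {y G : ℝ → F} {t C : ℝ}
    (hy : ContinuousOn y (Ici t))
    (hyd : ∀ x, t ≤ x → HasDerivWithinAt y (B x (y x) + G x) (Ici x) x)
    (hyC : ∀ s, t ≤ s → ‖y s‖ ≤ C) (hG : IntegrableOn (fun s => U t s (G s)) (Ioi t)) :
    y t = -∫ s in Ioi t, U t s (G s) := by
  have hvoc : ∀ᶠ T in atTop, ∫ s in t..T, U t s (G s) = U t T (y T) - y t := by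
    filter_upwards [eventually_ge_atTop t] with T hT
    rw [hU.integral_eq_sub hB t hT (hy.mono Icc_subset_Ici_self) (fun x hx => hyd x hx.1)
      ((intervalIntegrable_iff_integrableOn_Ioc_of_le hT).2 (hG.mono_set Ioc_subset_Ioi_self)),
      hU.apply_self, ContinuousLinearMap.id_apply]
  -- the boundary term `U t T (y T)` dies as `T → ∞`, leaving `∫ = 0 - y t`
  have hlim := (intervalIntegral_tendsto_integral_Ioi t hG tendsto_id).congr' hvoc
  rw [tendsto_nhds_unique hlim ((tendsto_apply_atTop_of_decay hσ hdecay hyC).sub_const (y t)),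
    zero_sub, neg_neg]

theorem Measurable.comp_of_countable_range {α β γ : Type*} [MeasurableSpace α]
    [MeasurableSpace β] [MeasurableSingletonClass β] [MeasurableSpace γ] {f : α → β}
    (hf : Measurable f) (hfc : (range f).Countable) (g : β → γ) : Measurable (g ∘ f) := by
  intro A _
  have hpre : g ∘ f ⁻¹' A = f ⁻¹' (g ⁻¹' A ∩ range f) := by
    ext x
    simp
  rw [hpre]
  exact hf (hfc.mono inter_subset_right).measurableSet

section Step

variable {θ : ℤ → ℝ} {β : ℝ → ℝ}

theorem exists_index_of_strictMono (hθ : StrictMono θ) (htop : Tendsto θ atTop atTop)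
    (hbot : Tendsto θ atBot atBot) (t : ℝ) : ∃ i, θ i ≤ t ∧ t < θ (i + 1) := by
  obtain ⟨lo, hlo⟩ := (hbot.eventually (eventually_le_atBot t)).exists
  obtain ⟨hi, hhi⟩ := (htop.eventually (eventually_gt_atTop t)).exists
  obtain ⟨i, hit, hmax⟩ := Int.exists_greatest_of_bdd (P := fun i => θ i ≤ t)
    ⟨hi, fun j hj => (hθ.lt_iff_lt.1 (hj.trans_lt hhi)).le⟩ ⟨lo, hlo⟩
  exact ⟨i, hit, lt_of_not_ge fun h => by linarith [hmax _ h]⟩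

theorem step_step (hθ : StrictMono θ) (hidx : ∀ t, ∃ i, θ i ≤ t ∧ t < θ (i + 1))
    (hβ : ∀ (i : ℤ) (t : ℝ), θ i ≤ t → t < θ (i + 1) → β t = θ i) (t : ℝ) :
    β (β t) = β t := by
  obtain ⟨i, hi, hi'⟩ := hidx t
  rw [hβ i t hi hi']
  exact hβ i (θ i) le_rfl (hθ (lt_add_one i))

theorem monotone_step (hθ : StrictMono θ) (hidx : ∀ t, ∃ i, θ i ≤ t ∧ t < θ (i + 1))
    (hβ : ∀ (i : ℤ) (t : ℝ), θ i ≤ t → t < θ (i + 1) → β t = θ i) : Monotone β := by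
  intro s t hst
  obtain ⟨i, hi, hi'⟩ := hidx s
  obtain ⟨j, hj, hj'⟩ := hidx t
  rw [hβ i s hi hi', hβ j t hj hj']
  exact hθ.monotone (Int.lt_add_one_iff.1 (hθ.lt_iff_lt.1 ((hi.trans hst).trans_lt hj')))

theorem range_step_subset (hidx : ∀ t, ∃ i, θ i ≤ t ∧ t < θ (i + 1))
    (hβ : ∀ (i : ℤ) (t : ℝ), θ i ≤ t → t < θ (i + 1) → β t = θ i) : range β ⊆ range θ := by
  rintro _ ⟨t, rfl⟩
  obtain ⟨i, hi, hi'⟩ := hidx t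
  exact ⟨i, (hβ i t hi hi').symm⟩

theorem measurable_comp_step {X : Type*} [MeasurableSpace X] (hθ : StrictMono θ)
    (hidx : ∀ t, ∃ i, θ i ≤ t ∧ t < θ (i + 1))
    (hβ : ∀ (i : ℤ) (t : ℝ), θ i ≤ t → t < θ (i + 1) → β t = θ i) (z : ℝ → X) :
    Measurable (z ∘ β) :=
  (monotone_step hθ hidx hβ).measurable.comp_of_countable_range
    ((countable_range θ).mono (range_step_subset hidx hβ)) z

theorem norm_comp_step_le {X : Type*} [Norm X] (hθ : StrictMono θ)
    (hidx : ∀ t, ∃ i, θ i ≤ t ∧ t < θ (i + 1))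
    (hβ : ∀ (i : ℤ) (t : ℝ), θ i ≤ t → t < θ (i + 1) → β t = θ i) {z : ℝ → X} {t₀ C : ℝ}
    (hC : ∀ t, t₀ ≤ t → ‖z t‖ ≤ C) {s : ℝ} (hs : t₀ ≤ s) :
    ‖z (β s)‖ ≤ max C ‖z (β t₀)‖ := by
  rcases le_or_gt t₀ (β s) with h | h
  · exact (hC _ h).trans (le_max_left _ _)
  · -- a step value below `t₀` is the one of the step containing `t₀`
    have hmono := monotone_step hθ hidx hβ
    have hβs : β s = β t₀ := le_antisymm
      (step_step hθ hidx hβ s ▸ hmono h.le) (hmono hs)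
    rw [hβs]
    exact le_max_right _ _

end Step

section Forcing

variable {X Y : Type*} [NormedAddCommGroup X] [NormedAddCommGroup Y]

theorem continuous_uncurry_of_lipschitz {g : ℝ → X → X → Y}
    (hgc : ∀ x y, Continuous fun t => g t x y) {L : ℝ} (hL : 0 ≤ L)
    (hlip : ∀ t x y x' y', ‖g t x y - g t x' y'‖ ≤ L * (‖x - x'‖ + ‖y - y'‖)) :
    Continuous fun p : ℝ × X × X => g p.1 p.2.1 p.2.2 := by
  refine continuous_prod_of_continuous_lipschitzWith' (fun p : ℝ × X × X => g p.1 p.2.1 p.2.2)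
    (2 * L).toNNReal (fun t => LipschitzWith.of_dist_le_mul fun p q => ?_) fun p => hgc p.1 p.2
  rw [dist_eq_norm, dist_eq_norm, Real.coe_toNNReal _ (by positivity)]
  calc ‖g t p.1 p.2 - g t q.1 q.2‖ ≤ L * (‖p.1 - q.1‖ + ‖p.2 - q.2‖) := hlip t _ _ _ _
    _ ≤ L * (‖p - q‖ + ‖p - q‖) := by
        gcongr
        exacts [norm_fst_le (p - q), norm_snd_le (p - q)]
    _ = 2 * L * ‖p - q‖ := by ring

theorem norm_le_of_lipschitz_of_map_zero {g : ℝ → X → X → Y} {L : ℝ}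
    (hlip : ∀ t x y x' y', ‖g t x y - g t x' y'‖ ≤ L * (‖x - x'‖ + ‖y - y'‖))
    (h0 : ∀ t, g t 0 0 = 0) (t : ℝ) (x y : X) : ‖g t x y‖ ≤ L * (‖x‖ + ‖y‖) := by
  simpa [h0] using hlip t x y 0 0

end Forcing

theorem SolOn.hasDerivWithinAt_Ici {k m : ℕ} {θ : ℤ → ℝ} {β : ℝ → ℝ}
    {Bp : ℝ → Ek k →L[ℝ] Ek k} {Bm : ℝ → Ek m →L[ℝ] Ek m}
    {gp : ℝ → Ek k × Ek m → Ek k × Ek m → Ek k} {gm : ℝ → Ek k × Ek m → Ek k × Ek m → Ek m}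
    {z : ℝ → Ek k × Ek m} {t₀ t : ℝ} (hz : SolOn θ β Bp Bm gp gm z (Ici t₀)) (ht : t₀ ≤ t) :
    HasDerivWithinAt (fun s => (z s).1) (Bp t (z t).1 + gp t (z t) (z (β t))) (Ici t) t ∧
      HasDerivWithinAt (fun s => (z s).2) (Bm t (z t).2 + gm t (z t) (z (β t))) (Ici t) t := by
  have h := (hz.2 t ht).1
  rwa [inter_eq_left.2 (Ici_subset_Ici.2 ht)] at h

theorem stmt_8_general
    (k m : ℕ)
    (θ : ℤ → ℝ) (hθmono : StrictMono θ)
    (hθtop : Tendsto θ atTop atTop) (hθbot : Tendsto θ atBot atBot)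
    (β : ℝ → ℝ) (hβ : ∀ (i : ℤ) (t : ℝ), θ i ≤ t → t < θ (i + 1) → β t = θ i)
    (Bp : ℝ → Ek k →L[ℝ] Ek k) (Bm : ℝ → Ek m →L[ℝ] Ek m)
    (hBp : Continuous Bp) (hBm : Continuous Bm)
    (U : ℝ → ℝ → Ek k →L[ℝ] Ek k) (V : ℝ → ℝ → Ek m →L[ℝ] Ek m)
    (hUid : ∀ s : ℝ, U s s = ContinuousLinearMap.id ℝ (Ek k))
    (hVid : ∀ s : ℝ, V s s = ContinuousLinearMap.id ℝ (Ek m))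
    (hUderiv : ∀ s t : ℝ, HasDerivAt (fun r => U r s) ((Bp t).comp (U t s)) t)
    (hVderiv : ∀ s t : ℝ, HasDerivAt (fun r => V r s) ((Bm t).comp (V t s)) t)
    (K σ : ℝ) (hσ : 0 < σ)
    (hV : ∀ s t : ℝ, t ≤ s → ‖V t s‖ ≤ K * Real.exp (-σ * (s - t)))
    (gp : ℝ → Ek k × Ek m → Ek k × Ek m → Ek k)
    (gm : ℝ → Ek k × Ek m → Ek k × Ek m → Ek m)
    (hgpc : ∀ zz ww, Continuous fun t => gp t zz ww)
    (hgmc : ∀ zz ww, Continuous fun t => gm t zz ww)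
    (L : ℝ) (hL : 0 < L)
    (hlip : ∀ (t : ℝ) (z₁ w₁ z₂ w₂ : Ek k × Ek m),
      ‖gp t z₁ w₁ - gp t z₂ w₂‖ + ‖gm t z₁ w₁ - gm t z₂ w₂‖ ≤
        L * (‖z₁ - z₂‖ + ‖w₁ - w₂‖))
    (hg0 : ∀ t : ℝ, gp t 0 0 = 0 ∧ gm t 0 0 = 0)
    (t₀ : ℝ) (z : ℝ → Ek k × Ek m)
    (hz : SolOn θ β Bp Bm gp gm z (Ici t₀))
    (hb : ∃ C : ℝ, ∀ t : ℝ, t₀ ≤ t → ‖z t‖ ≤ C) :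
    ∀ t : ℝ, t₀ ≤ t →
      ((z t).1 = U t t₀ (z t₀).1 + ∫ s in t₀..t, U t s (gp s (z s) (z (β s)))) ∧
      IntegrableOn (fun s => V t s (gm s (z s) (z (β s)))) (Ioi t) ∧
      (z t).2 = -∫ s in Ioi t, V t s (gm s (z s) (z (β s))) := by
  obtain ⟨C, hC⟩ := hb
  have hU' : IsTransitionOperator Bp U := ⟨hUid, hUderiv⟩
  have hV' : IsTransitionOperator Bm V := ⟨hVid, hVderiv⟩
  have hidx := exists_index_of_strictMono hθmono hθtop hθbot
  let g : ℝ → Ek k × Ek m → Ek k × Ek m → Ek k × Ek m := fun t x y => (gp t x y, gm t x y)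
  have hglip : ∀ t x y x' y', ‖g t x y - g t x' y'‖ ≤ L * (‖x - x'‖ + ‖y - y'‖) :=
    fun t x y x' y' => (max_le_add_of_nonneg (norm_nonneg _) (norm_nonneg _)).trans
      (hlip t x y x' y')
  let G : ℝ → Ek k × Ek m := fun s => g s (z s) (z (β s))
  have hGmeas : AEStronglyMeasurable G (volume.restrict (Ici t₀)) :=
    (continuous_uncurry_of_lipschitz (fun x y => (hgpc x y).prodMk (hgmc x y)) hL.le
      hglip).comp_aestronglyMeasurable (aestronglyMeasurable_id.prodMk
        ((hz.1.aestronglyMeasurable measurableSet_Ici).prodMk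
          (measurable_comp_step hθmono hidx hβ z).aestronglyMeasurable))
  have hGle : ∀ s, t₀ ≤ s → ‖G s‖ ≤ L * (C + max C ‖z (β t₀)‖) := fun s hs =>
    (norm_le_of_lipschitz_of_map_zero hglip (fun t => Prod.ext (hg0 t).1 (hg0 t).2) _ _ _).trans
      (by gcongr; exacts [hC s hs, norm_comp_step_le hθmono hidx hβ hC hs])
  intro t ht
  have hGm : IntegrableOn (fun s => V t s (G s).2) (Ioi t) :=
    integrableOn_Ioi_apply_of_decay hσ hV (hV'.continuous_right hBm t)
      (hGmeas.snd.mono_measure (Measure.restrict_mono (Ioi_subset_Ici ht) le_rfl))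
      fun s hs => (norm_snd_le _).trans (hGle s (ht.trans hs.le))
  refine ⟨?_, hGm, hV'.eq_neg_integral_Ioi hBm hσ hV (hz.1.snd.mono (Ici_subset_Ici.2 ht))
    (fun x hx => (hz.hasDerivWithinAt_Ici (ht.trans hx)).2)
    (fun s hs => (norm_snd_le _).trans (hC s (ht.trans hs))) hGm⟩
  have hGp : IntervalIntegrable (fun s => U t s (G s).1) volume t₀ t :=
    (hU'.continuous_right hBp t).intervalIntegrable_clm_apply ht
      (hGmeas.fst.mono_measure (Measure.restrict_mono Icc_subset_Ici_self le_rfl))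
      fun s hs => (norm_fst_le _).trans (hGle s hs.1)
  rw [hU'.integral_eq_sub hBp t ht (hz.1.fst.mono Icc_subset_Ici_self)
    (fun x hx => (hz.hasDerivWithinAt_Ici hx.1).1) hGp, hU'.apply_self,
    ContinuousLinearMap.id_apply, add_sub_cancel]

theorem stmt_8
    (k m : ℕ) (hk : 1 ≤ k) (hm : 1 ≤ m)
    (θ : ℤ → ℝ) (hθmono : StrictMono θ)
    (θb : ℝ) (hθb : 0 < θb) (hgap : ∀ i : ℤ, θ (i + 1) - θ i ≤ θb)
    (hθtop : Tendsto θ atTop atTop) (hθbot : Tendsto θ atBot atBot)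
    (β : ℝ → ℝ) (hβ : ∀ (i : ℤ) (t : ℝ), θ i ≤ t → t < θ (i + 1) → β t = θ i)
    (Bp : ℝ → Ek k →L[ℝ] Ek k) (Bm : ℝ → Ek m →L[ℝ] Ek m)
    (hBp : Continuous Bp) (hBm : Continuous Bm)
    (U : ℝ → ℝ → Ek k →L[ℝ] Ek k) (V : ℝ → ℝ → Ek m →L[ℝ] Ek m)
    (hUid : ∀ s : ℝ, U s s = ContinuousLinearMap.id ℝ (Ek k))
    (hVid : ∀ s : ℝ, V s s = ContinuousLinearMap.id ℝ (Ek m))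
    (hUderiv : ∀ s t : ℝ, HasDerivAt (fun r => U r s) ((Bp t).comp (U t s)) t)
    (hVderiv : ∀ s t : ℝ, HasDerivAt (fun r => V r s) ((Bm t).comp (V t s)) t)
    (K σ : ℝ) (hK : 1 ≤ K) (hσ : 0 < σ)
    (hU : ∀ s t : ℝ, s ≤ t → ‖U t s‖ ≤ K * Real.exp (-σ * (t - s)))
    (hV : ∀ s t : ℝ, t ≤ s → ‖V t s‖ ≤ K * Real.exp (-σ * (s - t)))
    (gp : ℝ → Ek k × Ek m → Ek k × Ek m → Ek k)
    (gm : ℝ → Ek k × Ek m → Ek k × Ek m → Ek m)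
    (hgpc : ∀ zz ww, Continuous fun t => gp t zz ww)
    (hgmc : ∀ zz ww, Continuous fun t => gm t zz ww)
    (L : ℝ) (hL : 0 < L)
    (hlip : ∀ (t : ℝ) (z₁ w₁ z₂ w₂ : Ek k × Ek m),
      ‖gp t z₁ w₁ - gp t z₂ w₂‖ + ‖gm t z₁ w₁ - gm t z₂ w₂‖ ≤
        L * (‖z₁ - z₂‖ + ‖w₁ - w₂‖))
    (hg0 : ∀ t : ℝ, gp t 0 0 = 0 ∧ gm t 0 0 = 0)
    (hVcoc : ∀ t s r : ℝ, (V t s).comp (V s r) = V t r)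
    (α : ℝ) (hα : 0 < α) (hασ : α < σ)
    (hsmall : 2 * K * L * (1 + Real.exp (σ * θb)) < σ - α)
    (t₀ : ℝ) (z : ℝ → Ek k × Ek m)
    (hz : SolOn θ β Bp Bm gp gm z (Ici t₀))
    (hb : ∃ C : ℝ, ∀ t : ℝ, t₀ ≤ t → ‖z t‖ ≤ C) :
    ∀ t : ℝ, t₀ ≤ t →
      ((z t).1 = U t t₀ (z t₀).1 + ∫ s in t₀..t, U t s (gp s (z s) (z (β s)))) ∧
      IntegrableOn (fun s => V t s (gm s (z s) (z (β s)))) (Ioi t) ∧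
      (z t).2 = -∫ s in Ioi t, V t s (gm s (z s) (z (β s))) :=
  stmt_8_general k m θ hθmono hθtop hθbot β hβ Bp Bm hBp hBm U V hUid hVid hUderiv hVderiv K σ hσ hV
    gp gm hgpc hgmc L hL hlip hg0 t₀ z hz hb
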